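/- arXiv:1702.03887 — 2 statements merged into one kernel-verified Lean document; each statement's English description precedes it below -/
import Mathlib

section
/- Let ρ₀ > 0, μ, b ∈ ℝ, β ∈ [0, π/2), and define ρ(θ,ψ) = ρ₀ e^{μθ + bψ}. If the surface defined by ρ is equiangular with characteristic angle β on the strip {(θ,ψ) : θ ∈ ℝ, ψ ∈ (−π/2, π/2)} (the angle between N(θ,ψ) and X(θ,ψ) equals β at every such point), then μ = 0 and b² = tan²β (i.e. b = tan β or b = −tan β). -/
open Real

/-- The surface map `X(θ,ψ) = ρ(θ,ψ)·(cos ψ cos θ, cos ψ sin θ, sin ψ)`. -/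
noncomputable def Xsurf (ρ : ℝ → ℝ → ℝ) (θ ψ : ℝ) : EuclideanSpace ℝ (Fin 3) :=
  WithLp.toLp 2 ![ρ θ ψ * Real.cos ψ * Real.cos θ, ρ θ ψ * Real.cos ψ * Real.sin θ, ρ θ ψ * Real.sin ψ]

/-- The normal vector `N = X_θ × X_ψ`. -/
noncomputable def Nsurf (ρ : ℝ → ℝ → ℝ) (θ ψ : ℝ) : EuclideanSpace ℝ (Fin 3) :=
  WithLp.toLp 2 (crossProduct (deriv (fun t => Xsurf ρ t ψ) θ).ofLp (deriv (fun s => Xsurf ρ θ s) ψ).ofLp)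

/-!
In the orthonormal frame `u = X/ρ`, `e_θ`, `e_ψ` of the sphere one has
`X_θ = ρ_θ u + ρ cos ψ e_θ` and `X_ψ = ρ_ψ u + ρ e_ψ`, hence `N·X = ρ³ cos ψ` and
`|N|² = ρ² (ρ_θ² + (ρ_ψ² + ρ²) cos² ψ)`. For `ρ = ρ₀ e^{μθ + bψ}` the equiangularity condition
`(N·X)² = cos² β |N|² |X|²` becomes `cos² ψ = cos² β (μ² + (1 + b²) cos² ψ)` for every `ψ`.
Comparing `ψ = 0` with `ψ = π/3` forces `μ = 0`, and then `cos² β (1 + b²) = 1`, i.e. `b² = tan² β`.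
-/

theorem hasDerivAt_piLp {𝕜 ι : Type*} [NontriviallyNormedField 𝕜] [Fintype ι] {E : ι → Type*}
    [∀ i, NormedAddCommGroup (E i)] [∀ i, NormedSpace 𝕜 (E i)] (p : ENNReal) [Fact (1 ≤ p)]
    {f : 𝕜 → PiLp p E} {f' : PiLp p E} {x : 𝕜} :
    HasDerivAt f f' x ↔ ∀ i, HasDerivAt (fun t => f t i) (f' i) x :=
  ⟨fun h i => (PiLp.hasFDerivAt_apply p (f x) i).comp_hasDerivAt x h,
    fun h => by simpa [Function.comp_def] using
      (PiLp.hasFDerivAt_toLp (𝕜 := 𝕜) p _).comp_hasDerivAt x (hasDerivAt_pi.2 h)⟩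

section Surface

variable {ρ : ℝ → ℝ → ℝ} {θ ψ ρθ ρψ : ℝ}

theorem hasDerivAt_Xsurf_theta (h : HasDerivAt (fun t => ρ t ψ) ρθ θ) :
    HasDerivAt (fun t => Xsurf ρ t ψ)
      (WithLp.toLp 2 ![ρθ * cos ψ * cos θ - ρ θ ψ * cos ψ * sin θ,
        ρθ * cos ψ * sin θ + ρ θ ψ * cos ψ * cos θ, ρθ * sin ψ]) θ := by
  refine (hasDerivAt_piLp 2).2 fun i => ?_
  fin_cases i
  · exact ((h.mul_const (cos ψ)).mul (hasDerivAt_cos θ)).congr_deriv (by simp [sub_eq_add_neg])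
  · exact ((h.mul_const (cos ψ)).mul (hasDerivAt_sin θ)).congr_deriv (by simp)
  · exact h.mul_const (sin ψ)

theorem hasDerivAt_Xsurf_psi (h : HasDerivAt (fun s => ρ θ s) ρψ ψ) :
    HasDerivAt (fun s => Xsurf ρ θ s)
      (WithLp.toLp 2 ![(ρψ * cos ψ - ρ θ ψ * sin ψ) * cos θ,
        (ρψ * cos ψ - ρ θ ψ * sin ψ) * sin θ, ρψ * sin ψ + ρ θ ψ * cos ψ]) ψ := by
  refine (hasDerivAt_piLp 2).2 fun i => ?_
  fin_cases i
  · exact ((h.mul (hasDerivAt_cos ψ)).mul_const (cos θ)).congr_deriv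
      (by simp [sub_eq_add_neg, add_mul])
  · exact ((h.mul (hasDerivAt_cos ψ)).mul_const (sin θ)).congr_deriv
      (by simp [sub_eq_add_neg, add_mul])
  · exact h.mul (hasDerivAt_sin ψ)

theorem inner_Nsurf_Xsurf (hθ : HasDerivAt (fun t => ρ t ψ) ρθ θ)
    (hψ : HasDerivAt (fun s => ρ θ s) ρψ ψ) :
    inner ℝ (Nsurf ρ θ ψ) (Xsurf ρ θ ψ) = ρ θ ψ ^ 3 * cos ψ := by
  rw [Nsurf, (hasDerivAt_Xsurf_theta hθ).deriv, (hasDerivAt_Xsurf_psi hψ).deriv]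
  simp only [cross_apply, Xsurf, PiLp.inner_apply, RCLike.inner_apply, ringHom_apply,
    Fin.sum_univ_three, Fin.isValue, Matrix.cons_val_zero, Matrix.cons_val_one, Matrix.cons_val]
  linear_combination ρ θ ψ ^ 3 * cos ψ * (sin ψ ^ 2 + cos ψ ^ 2) * sin_sq_add_cos_sq θ +
    ρ θ ψ ^ 3 * cos ψ * sin_sq_add_cos_sq ψ

theorem norm_Nsurf_sq (hθ : HasDerivAt (fun t => ρ t ψ) ρθ θ)
    (hψ : HasDerivAt (fun s => ρ θ s) ρψ ψ) :
    ‖Nsurf ρ θ ψ‖ ^ 2 = ρ θ ψ ^ 2 * (ρθ ^ 2 + (ρψ ^ 2 + ρ θ ψ ^ 2) * cos ψ ^ 2) := by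
  rw [Nsurf, (hasDerivAt_Xsurf_theta hθ).deriv, (hasDerivAt_Xsurf_psi hψ).deriv]
  simp only [cross_apply, EuclideanSpace.norm_sq_eq, norm_eq_abs, sq_abs, Fin.sum_univ_three,
    Fin.isValue, Matrix.cons_val_zero, Matrix.cons_val_one, Matrix.cons_val]
  grind [sin_sq_add_cos_sq]

theorem norm_Xsurf_sq : ‖Xsurf ρ θ ψ‖ ^ 2 = ρ θ ψ ^ 2 := by
  simp only [Xsurf, EuclideanSpace.norm_sq_eq, norm_eq_abs, sq_abs, Fin.sum_univ_three,
    Fin.isValue, Matrix.cons_val_zero, Matrix.cons_val_one, Matrix.cons_val]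
  linear_combination ρ θ ψ ^ 2 * cos ψ ^ 2 * sin_sq_add_cos_sq θ + ρ θ ψ ^ 2 * sin_sq_add_cos_sq ψ

end Surface

noncomputable def selfSimilarRadius (ρ₀ μ b θ ψ : ℝ) : ℝ := ρ₀ * exp (μ * θ + b * ψ)

section SelfSimilar

variable {ρ₀ μ b β θ ψ : ℝ}

theorem hasDerivAt_selfSimilarRadius_theta :
    HasDerivAt (fun t => selfSimilarRadius ρ₀ μ b t ψ) (μ * selfSimilarRadius ρ₀ μ b θ ψ) θ := by
  have := ((((hasDerivAt_id θ).const_mul μ).add_const (b * ψ)).exp).const_mul ρ₀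
  exact this.congr_deriv (by simp only [id_eq, mul_one, selfSimilarRadius]; ring)

theorem hasDerivAt_selfSimilarRadius_psi :
    HasDerivAt (fun s => selfSimilarRadius ρ₀ μ b θ s) (b * selfSimilarRadius ρ₀ μ b θ ψ) ψ := by
  have := ((((hasDerivAt_id ψ).const_mul b).const_add (μ * θ)).exp).const_mul ρ₀
  exact this.congr_deriv (by simp only [id_eq, mul_one, selfSimilarRadius]; ring)

theorem cos_sq_eq_of_angle_selfSimilar (hρ₀ : ρ₀ ≠ 0)
    (h : InnerProductGeometry.angle (Nsurf (selfSimilarRadius ρ₀ μ b) θ ψ)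
      (Xsurf (selfSimilarRadius ρ₀ μ b) θ ψ) = β) :
    cos ψ ^ 2 = cos β ^ 2 * (μ ^ 2 + (1 + b ^ 2) * cos ψ ^ 2) := by
  have hr : selfSimilarRadius ρ₀ μ b θ ψ ≠ 0 := mul_ne_zero hρ₀ (exp_pos _).ne'
  have key := InnerProductGeometry.cos_angle_mul_norm_mul_norm
    (Nsurf (selfSimilarRadius ρ₀ μ b) θ ψ) (Xsurf (selfSimilarRadius ρ₀ μ b) θ ψ)
  rw [h, inner_Nsurf_Xsurf hasDerivAt_selfSimilarRadius_theta
    hasDerivAt_selfSimilarRadius_psi] at key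
  have key_sq := congrArg (· ^ 2) key
  simp only [mul_pow, norm_Xsurf_sq, norm_Nsurf_sq hasDerivAt_selfSimilarRadius_theta
    hasDerivAt_selfSimilarRadius_psi] at key_sq
  apply mul_left_cancel₀ (pow_ne_zero 6 hr)
  linear_combination -key_sq

end SelfSimilar

theorem selfSimilar_equiangular_general (ρ₀ μ b β : ℝ) (hρ₀ : 0 < ρ₀)
    (hangle : ∀ θ : ℝ, ∀ ψ ∈ Set.Ioo (-(π / 2)) (π / 2),
      InnerProductGeometry.angle
        (Nsurf (fun θ ψ => ρ₀ * Real.exp (μ * θ + b * ψ)) θ ψ)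
        (Xsurf (fun θ ψ => ρ₀ * Real.exp (μ * θ + b * ψ)) θ ψ) = β) :
    μ = 0 ∧ b ^ 2 = Real.tan β ^ 2 := by
  have h₀ := cos_sq_eq_of_angle_selfSimilar hρ₀.ne'
    (hangle 0 0 (by constructor <;> linarith [pi_pos]))
  have h₃ := cos_sq_eq_of_angle_selfSimilar hρ₀.ne'
    (hangle 0 (π / 3) (by constructor <;> linarith [pi_pos]))
  rw [cos_zero] at h₀
  rw [cos_pi_div_three] at h₃
  have hcos : cos β ≠ 0 := by
    rintro hc
    norm_num [hc] at h₀
  have hμ : μ = 0 := by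
    have : cos β ^ 2 * μ ^ 2 = 0 := by linear_combination (h₀ - 4 * h₃) / 3
    simpa [hcos] using this
  refine ⟨hμ, ?_⟩
  rw [← inv_one_add_tan_sq hcos, hμ] at h₀
  field_simp at h₀
  linarith

/-- If the self-similar surface `ρ(θ,ψ) = ρ₀ e^{μθ + bψ}` is equiangular with
characteristic angle `β ∈ [0, π/2)` on the strip `ℝ × (−π/2, π/2)`, then
`μ = 0` and `b² = tan²β`. -/
theorem selfSimilar_equiangular (ρ₀ μ b β : ℝ) (hρ₀ : 0 < ρ₀)
    (hβ : β ∈ Set.Ico 0 (π / 2))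
    (hangle : ∀ θ : ℝ, ∀ ψ ∈ Set.Ioo (-(π / 2)) (π / 2),
      InnerProductGeometry.angle
        (Nsurf (fun θ ψ => ρ₀ * Real.exp (μ * θ + b * ψ)) θ ψ)
        (Xsurf (fun θ ψ => ρ₀ * Real.exp (μ * θ + b * ψ)) θ ψ) = β) :
    μ = 0 ∧ b ^ 2 = Real.tan β ^ 2 :=
  selfSimilar_equiangular_general ρ₀ μ b β hρ₀ hangle
end

section
/- Let μ > 0, a > 0, let J = (−arctan a, arctan a), and let h be as defined on J. Let v : J → ℝ be continuously differentiable with v(ψ) > 0 for all ψ ∈ J, and suppose v'(ψ)² = μ²·(a² − tan²ψ)·v(ψ)² for all ψ ∈ J. Then either v(ψ) = v(0)·e^{h(ψ)} for all ψ ∈ J, or v(ψ) = v(0)·e^{−h(ψ)} for all ψ ∈ J. -/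
/-! Because `v > 0`, the continuous functions `v'` and `h'·v`, with `h' = μ√(a² − tan²ψ) > 0`, have
equal squares and do not vanish on the interval, so by connectedness `v' = h'·v` throughout or
`v' = −h'·v` throughout. In either case `v·e^{∓h}` has zero derivative, hence is constant. -/

open Real

/-- The antiderivative `h(ψ) = μ·[√(a²+1)·arctan(√(a²+1)·tan ψ / √(a² − tan²ψ))
− arctan(tan ψ / √(a² − tan²ψ))]`. -/
noncomputable def hFun (μ a ψ : ℝ) : ℝ :=
  μ * (Real.sqrt (a ^ 2 + 1) *
        Real.arctan (Real.sqrt (a ^ 2 + 1) * Real.tan ψ / Real.sqrt (a ^ 2 - Real.tan ψ ^ 2))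
      - Real.arctan (Real.tan ψ / Real.sqrt (a ^ 2 - Real.tan ψ ^ 2)))

open Set

lemma Ioo_neg_arctan_arctan_subset (a : ℝ) :
    Ioo (-arctan a) (arctan a) ⊆ Ioo (-(π / 2)) (π / 2) :=
  Ioo_subset_Ioo (neg_le_neg (arctan_lt_pi_div_two a).le) (arctan_lt_pi_div_two a).le

lemma tan_sq_lt_sq_of_mem_Ioo_arctan {a ψ : ℝ} (hψ : ψ ∈ Ioo (-arctan a) (arctan a)) :
    tan ψ ^ 2 < a ^ 2 := by
  obtain ⟨hlo, hhi⟩ := Ioo_neg_arctan_arctan_subset a hψ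
  rw [← arctan_tan hlo hhi, ← arctan_neg, mem_Ioo, arctan_lt_arctan_iff,
    arctan_lt_arctan_iff] at hψ
  exact sq_lt_sq' hψ.1 hψ.2

lemma hasDerivAt_arctan_mul_div_sqrt_sq_sub {a t : ℝ} (k : ℝ) (ht : t ^ 2 < a ^ 2) :
    HasDerivAt (fun x => arctan (k * x / √(a ^ 2 - x ^ 2)))
      (k * a ^ 2 / (√(a ^ 2 - t ^ 2) * (a ^ 2 - t ^ 2 + k ^ 2 * t ^ 2))) t := by
  have hpos : 0 < a ^ 2 - t ^ 2 := by linarith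
  have hs : 0 < √(a ^ 2 - t ^ 2) := sqrt_pos.2 hpos
  have hs2 : √(a ^ 2 - t ^ 2) ^ 2 = a ^ 2 - t ^ 2 := sq_sqrt hpos.le
  have hsqrt : HasDerivAt (fun x => √(a ^ 2 - x ^ 2)) (-t / √(a ^ 2 - t ^ 2)) t := by
    refine ((hasDerivAt_const t (a ^ 2)).fun_sub (hasDerivAt_pow 2 t)).sqrt hpos.ne'
      |>.congr_deriv ?_
    field_simp
    ring
  convert (((hasDerivAt_id' t).const_mul k).fun_div hsqrt hs.ne').arctan using 1
  field_simp
  rw [hs2]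
  ring

noncomputable def hOfTan (a t : ℝ) : ℝ :=
  √(a ^ 2 + 1) * arctan (√(a ^ 2 + 1) * t / √(a ^ 2 - t ^ 2)) - arctan (t / √(a ^ 2 - t ^ 2))

lemma hFun_eq_mul_hOfTan_tan (μ a : ℝ) : hFun μ a = fun ψ => μ * hOfTan a (tan ψ) := rfl

/- With `s = √(a² − t²)` and `c = √(a² + 1)`, the two arctan terms contribute `c²/(s(1 + t²))`
and `1/s`, because `s² + c²t² = a²(1 + t²)` and `s² + t² = a²`. -/
lemma hasDerivAt_hOfTan {a t : ℝ} (ht : t ^ 2 < a ^ 2) :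
    HasDerivAt (hOfTan a) (√(a ^ 2 - t ^ 2) / (1 + t ^ 2)) t := by
  have hpos : 0 < a ^ 2 - t ^ 2 := by linarith
  have hs2 : √(a ^ 2 - t ^ 2) ^ 2 = a ^ 2 - t ^ 2 := sq_sqrt hpos.le
  have hc2 : √(a ^ 2 + 1) ^ 2 = a ^ 2 + 1 := sq_sqrt (by positivity)
  have harctan := hasDerivAt_arctan_mul_div_sqrt_sq_sub 1 ht
  simp only [one_mul, one_pow] at harctan
  refine ((hasDerivAt_arctan_mul_div_sqrt_sq_sub √(a ^ 2 + 1) ht).const_mul √(a ^ 2 + 1)).sub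
    harctan |>.congr_deriv ?_
  field_simp
  rw [hs2]
  linear_combination a ^ 2 * (a ^ 2 - t ^ 2) * hc2

lemma hasDerivAt_hFun (μ : ℝ) {a ψ : ℝ} (hψ : ψ ∈ Ioo (-arctan a) (arctan a)) :
    HasDerivAt (hFun μ a) (μ * √(a ^ 2 - tan ψ ^ 2)) ψ := by
  have hcos : cos ψ ≠ 0 := (cos_pos_of_mem_Ioo (Ioo_neg_arctan_arctan_subset a hψ)).ne'
  rw [hFun_eq_mul_hOfTan_tan]
  refine ((hasDerivAt_hOfTan (tan_sq_lt_sq_of_mem_Ioo_arctan hψ)).comp ψ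
    (hasDerivAt_tan hcos)).const_mul μ |>.congr_deriv ?_
  rw [one_div, ← inv_one_add_tan_sq hcos, inv_inv]
  field_simp

lemma hFun_zero (μ a : ℝ) : hFun μ a 0 = 0 := by
  simp [hFun]

theorem IsOpen.eqOn_mul_exp_sub_of_hasDerivAt {s : Set ℝ} (hs : IsOpen s)
    (hs' : IsPreconnected s) {v f f' : ℝ → ℝ} (hf : ∀ x ∈ s, HasDerivAt f (f' x) x)
    (hv : ∀ x ∈ s, HasDerivAt v (f' x * v x) x) {x₀ : ℝ} (hx₀ : x₀ ∈ s) :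
    EqOn v (fun x => v x₀ * exp (f x - f x₀)) s := by
  have hw : ∀ x ∈ s, HasDerivAt (fun x => v x * exp (-f x)) 0 x := fun x hx => by
    refine (hv x hx).mul (hf x hx).neg.exp |>.congr_deriv ?_
    ring
  intro x hx
  show v x = v x₀ * exp (f x - f x₀)
  have hconst : v x * exp (-f x) = v x₀ * exp (-f x₀) :=
    hs.is_const_of_deriv_eq_zero hs'
      (fun y hy => (hw y hy).differentiableAt.differentiableWithinAt)
      (fun y hy => (hw y hy).deriv) hx hx₀
  rw [sub_eq_neg_add, exp_add, ← mul_assoc, ← hconst, mul_assoc, ← exp_add, neg_add_cancel,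
    exp_zero, mul_one]

/-- If `v` is continuously differentiable and positive on `J = (−arctan a, arctan a)` and
satisfies `v'² = μ²(a² − tan²ψ)v²` on `J`, then `v = v(0)·e^{h}` on `J` or
`v = v(0)·e^{−h}` on `J`. -/
theorem separated_ode_solution (μ a : ℝ) (hμ : 0 < μ) (ha : 0 < a)
    (v : ℝ → ℝ)
    (hvdiff : ∀ ψ ∈ Set.Ioo (-Real.arctan a) (Real.arctan a), DifferentiableAt ℝ v ψ)
    (hvcont : ContinuousOn (deriv v) (Set.Ioo (-Real.arctan a) (Real.arctan a)))
    (hvpos : ∀ ψ ∈ Set.Ioo (-Real.arctan a) (Real.arctan a), 0 < v ψ)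
    (heq : ∀ ψ ∈ Set.Ioo (-Real.arctan a) (Real.arctan a),
      (deriv v ψ) ^ 2 = μ ^ 2 * (a ^ 2 - Real.tan ψ ^ 2) * (v ψ) ^ 2) :
    (∀ ψ ∈ Set.Ioo (-Real.arctan a) (Real.arctan a),
        v ψ = v 0 * Real.exp (hFun μ a ψ))
    ∨ (∀ ψ ∈ Set.Ioo (-Real.arctan a) (Real.arctan a),
        v ψ = v 0 * Real.exp (-(hFun μ a ψ))) := by
  set J := Ioo (-arctan a) (arctan a)
  set h' : ℝ → ℝ := fun ψ => μ * √(a ^ 2 - tan ψ ^ 2)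
  have h0 : (0 : ℝ) ∈ J := ⟨neg_neg_of_pos (arctan_pos.2 ha), arctan_pos.2 ha⟩
  have hsq_pos : ∀ ψ ∈ J, 0 < a ^ 2 - tan ψ ^ 2 := fun ψ hψ =>
    sub_pos.2 (tan_sq_lt_sq_of_mem_Ioo_arctan hψ)
  have hh'v_cont : ContinuousOn (h' * v) J := by
    have htan : ContinuousOn tan J := continuousOn_tan.mono fun ψ hψ =>
      (cos_pos_of_mem_Ioo (Ioo_neg_arctan_arctan_subset a hψ)).ne'
    have hv : ContinuousOn v J := fun ψ hψ => (hvdiff ψ hψ).continuousAt.continuousWithinAt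
    exact (continuousOn_const.mul (continuousOn_const.sub (htan.pow 2)).sqrt).mul hv
  have hsq : EqOn (deriv v ^ 2) ((h' * v) ^ 2) J := fun ψ hψ => by
    simp only [Pi.pow_apply, Pi.mul_apply, h', heq ψ hψ, mul_pow, sq_sqrt (hsq_pos ψ hψ).le]
  have hh'v_ne : ∀ {ψ}, ψ ∈ J → (h' * v) ψ ≠ 0 := fun hψ =>
    (mul_pos (mul_pos hμ (sqrt_pos.2 (hsq_pos _ hψ))) (hvpos _ hψ)).ne'
  have hsol (f f' : ℝ → ℝ) (hf : ∀ ψ ∈ J, HasDerivAt f (f' ψ) ψ) (hf0 : f 0 = 0)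
      (hv : EqOn (deriv v) (f' * v) J) : ∀ ψ ∈ J, v ψ = v 0 * exp (f ψ) := fun ψ hψ => by
    simpa [hf0] using isOpen_Ioo.eqOn_mul_exp_sub_of_hasDerivAt isPreconnected_Ioo hf
      (fun x hx => (hvdiff x hx).hasDerivAt.congr_deriv (hv hx)) h0 hψ
  rcases isPreconnected_Ioo.eq_or_eq_neg_of_sq_eq hvcont hh'v_cont hsq hh'v_ne with hpos | hneg
  · exact .inl <| hsol (hFun μ a) h' (fun _ => hasDerivAt_hFun μ) (hFun_zero μ a) hpos
  · refine .inr <| hsol (-hFun μ a) (-h') (fun _ hψ => (hasDerivAt_hFun μ hψ).neg) ?_ ?_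
    · simp [hFun_zero]
    · simpa only [neg_mul] using hneg
end
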